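/- Fix P_U and define f(γ) as the infimum of I(R;U,X) over all conditional distributions P_{RX|U} such that I(R;U)=I(X;U)=H(U|X,R)=0 and H(X)=log|𝒰|+γ. Then for every γ ≥ 0 the feasible set is non-empty, and f is non-increasing in γ on [0,∞). -/

import Mathlib

open Finset
open scoped Classical

/-- Shannon entropy of a (finitely supported) mass function on a countable
alphabet. -/
noncomputable def entC {α : Type*} (q : α → ℝ) : ℝ :=
  ∑' a, Real.negMulLog (q a)

/-- Feasibility of a joint mass function `p` of `(U,R,X)` (with key and
ciphertext alphabets embedded in `ℕ`) for the tradeoff problem: `p` is a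
finitely supported probability mass function whose `U`-marginal is the given
`P_U`, satisfying `I(R;U) = I(X;U) = H(U|X,R) = 0` and
`H(X) = log|𝒰| + γ`. -/
noncomputable def Feasible {𝒰 : Type*} [Fintype 𝒰]
    (PU : 𝒰 → ℝ) (γ : ℝ) (p : 𝒰 → ℕ → ℕ → ℝ) : Prop :=
  (∀ u r x, 0 ≤ p u r x)
  ∧ (Function.support fun t : 𝒰 × ℕ × ℕ => p t.1 t.2.1 t.2.2).Finite
  ∧ (∀ u, (∑' (r : ℕ), ∑' (x : ℕ), p u r x) = PU u)
  -- `I(X;U) = 0`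
  ∧ (∀ u x, (∑' (r : ℕ), p u r x) = PU u * (∑' (u' : 𝒰), ∑' (r : ℕ), p u' r x))
  -- `I(R;U) = 0`
  ∧ (∀ u r, (∑' (x : ℕ), p u r x) = PU u * (∑' (u' : 𝒰), ∑' (x : ℕ), p u' r x))
  -- `H(U|X,R) = 0`
  ∧ (∃ g : ℕ → ℕ → 𝒰, ∀ u r x, p u r x ≠ 0 → u = g r x)
  -- `H(X) = log|𝒰| + γ`
  ∧ (entC (fun x : ℕ => ∑' (u : 𝒰), ∑' (r : ℕ), p u r x)
      = Real.log ((univ.filter fun u => PU u ≠ 0).card) + γ)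

/-- Expected key consumption `I(R;U,X) = H(R) + H(U,X) − H(U,R,X)`. -/
noncomputable def keyCost {𝒰 : Type*} [Fintype 𝒰] (p : 𝒰 → ℕ → ℕ → ℝ) : ℝ :=
  entC (fun r : ℕ => ∑' (u : 𝒰), ∑' (x : ℕ), p u r x)
    + entC (fun t : 𝒰 × ℕ => ∑' (r : ℕ), p t.1 r t.2)
    - entC (fun t : 𝒰 × ℕ × ℕ => p t.1 t.2.1 t.2.2)

/-!
For `γ = 0` a one-time pad on the support of `P_U` is feasible: `X = a(U) + R` in `ZMod n`,
with `R` uniform and `a` injective on the support, `n` its size. Appending to the ciphertext a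
symbol `Z` independent of everything, of entropy `δ`, raises `H(X)` by `δ` and leaves
`I(R;U,X)` unchanged; and every `δ ≥ 0` is the entropy of some finitely supported law on `ℕ`
(intermediate value theorem). Hence every feasible set is nonempty and, for `γ₁ ≤ γ₂`, the
costs achievable at `γ₁` are achievable at `γ₂`. Costs are nonnegative by subadditivity of
entropy, so the infima can only decrease.
-/

open Real Function

section Entropy

variable {α β ι : Type*}

lemma entC_eq_sum {f : α → ℝ} {s : Finset α} (h : f.support ⊆ s) :
    entC f = ∑ a ∈ s, negMulLog (f a) :=
  tsum_eq_sum' ((support_comp_subset negMulLog_zero f).trans h)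

lemma entC_comp_equiv (e : β ≃ α) (f : α → ℝ) : entC (f ∘ e) = entC f :=
  e.tsum_eq fun a => negMulLog (f a)

lemma support_prod_mul_subset (f : α → ℝ) (g : β → ℝ) :
    (fun w : α × β => f w.1 * g w.2).support ⊆ f.support ×ˢ g.support :=
  fun _ hw => ⟨left_ne_zero_of_mul hw, right_ne_zero_of_mul hw⟩

lemma entC_mul {f : α → ℝ} {g : β → ℝ} (hf : f.support.Finite) (hg : g.support.Finite)
    (hf1 : ∑' a, f a = 1) (hg1 : ∑' b, g b = 1) :
    entC (fun w : α × β => f w.1 * g w.2) = entC f + entC g := by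
  have hfs : f.support ⊆ hf.toFinset := hf.coe_toFinset.superset
  have hgs : g.support ⊆ hg.toFinset := hg.coe_toFinset.superset
  rw [tsum_eq_sum' hfs] at hf1
  rw [tsum_eq_sum' hgs] at hg1
  rw [entC_eq_sum hfs, entC_eq_sum hgs, entC_eq_sum (s := hf.toFinset ×ˢ hg.toFinset),
    Finset.sum_product]
  · simp only [negMulLog_mul, Finset.sum_add_distrib, ← Finset.sum_mul, ← Finset.mul_sum, hf1,
      hg1, one_mul]
  · rw [Finset.coe_product]
    exact (support_prod_mul_subset f g).trans (Set.prod_mono hfs hgs)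

lemma entC_mul_of_equiv {f : α → ℝ} {g : β → ℝ} (e : ι ≃ α × β) (hf : f.support.Finite)
    (hg : g.support.Finite) (hf1 : ∑' a, f a = 1) (hg1 : ∑' b, g b = 1) :
    entC (fun c => f (e c).1 * g (e c).2) = entC f + entC g := by
  rw [← entC_mul hf hg hf1 hg1]
  exact entC_comp_equiv e fun w => f w.1 * g w.2

-- `∑ a ∈ s, A a * negMulLog (P a b / A a)` summed over `b` is `H(A, B) - H(A)`, while for each
-- `b` it is at most `negMulLog (B b)` by concavity of `negMulLog` (Jensen).
lemma sum_negMulLog_le_add (s : Finset α) (t : Finset β) {P : α → β → ℝ}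
    (hP : ∀ a b, 0 ≤ P a b) (h1 : ∑ a ∈ s, ∑ b ∈ t, P a b = 1) :
    ∑ a ∈ s, ∑ b ∈ t, negMulLog (P a b)
      ≤ ∑ a ∈ s, negMulLog (∑ b ∈ t, P a b) + ∑ b ∈ t, negMulLog (∑ a ∈ s, P a b) := by
  set A := fun a => ∑ b ∈ t, P a b
  have hA0 : ∀ a, 0 ≤ A a := fun a => Finset.sum_nonneg fun b _ => hP a b
  have hvanish : ∀ a, A a = 0 → ∀ b ∈ t, P a b = 0 := fun a ha =>
    (Finset.sum_eq_zero_iff_of_nonneg fun b _ => hP a b).1 ha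
  have hchain : ∀ a, ∑ b ∈ t, A a * negMulLog (P a b / A a)
      = ∑ b ∈ t, negMulLog (P a b) - negMulLog (A a) := by
    intro a
    by_cases ha : A a = 0
    · rw [ha, negMulLog_zero, sub_zero]
      simp only [zero_mul, Finset.sum_const_zero]
      exact (Finset.sum_eq_zero fun b hb => by rw [hvanish a ha b hb, negMulLog_zero]).symm
    · have h : ∀ b, A a * negMulLog (P a b / A a)
          = negMulLog (P a b) - P a b / A a * negMulLog (A a) := by
        intro b
        have := negMulLog_mul (A a) (P a b / A a)
        rw [mul_div_cancel₀ _ ha] at this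
        linarith
      simp only [h, Finset.sum_sub_distrib, ← Finset.sum_mul, ← Finset.sum_div]
      rw [show ∑ b ∈ t, P a b = A a from rfl, div_self ha, one_mul]
  have hjensen : ∀ b ∈ t, ∑ a ∈ s, A a * negMulLog (P a b / A a)
      ≤ negMulLog (∑ a ∈ s, P a b) := by
    intro b hb
    have := concaveOn_negMulLog.le_map_sum (t := s) (fun a _ => hA0 a) h1
      (fun a _ => Set.mem_Ici.2 (div_nonneg (hP a b) (hA0 a)))
    have hmix : ∑ a ∈ s, A a * (P a b / A a) = ∑ a ∈ s, P a b :=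
      Finset.sum_congr rfl fun a _ => by
        by_cases ha : A a = 0
        · rw [ha, hvanish a ha b hb, zero_mul]
        · rw [mul_div_cancel₀ _ ha]
    simpa only [smul_eq_mul, hmix] using this
  calc ∑ a ∈ s, ∑ b ∈ t, negMulLog (P a b)
      = ∑ a ∈ s, negMulLog (A a) + ∑ a ∈ s, ∑ b ∈ t, A a * negMulLog (P a b / A a) := by
        simp only [hchain, Finset.sum_sub_distrib]; ring
    _ = ∑ a ∈ s, negMulLog (A a) + ∑ b ∈ t, ∑ a ∈ s, A a * negMulLog (P a b / A a) := by
        rw [Finset.sum_comm]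
    _ ≤ _ := by gcongr with b hb; exact hjensen b hb

lemma support_tsum_snd_subset (F : α × β → ℝ) :
    (fun a => ∑' b, F (a, b)).support ⊆ Prod.fst '' F.support := by
  intro a ha
  obtain ⟨b, hb⟩ : ∃ b, F (a, b) ≠ 0 := by
    by_contra! h
    exact ha (by simp [h])
  exact ⟨(a, b), hb, rfl⟩

lemma support_tsum_fst_subset (F : α × β → ℝ) :
    (fun b => ∑' a, F (a, b)).support ⊆ Prod.snd '' F.support := by
  intro b hb
  obtain ⟨a, ha⟩ : ∃ a, F (a, b) ≠ 0 := by
    by_contra! h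
    exact hb (by simp [h])
  exact ⟨(a, b), ha, rfl⟩

lemma entC_le_entC_add_entC {P : α × β → ℝ} (hP : ∀ w, 0 ≤ P w) (hfin : P.support.Finite)
    (h1 : ∑' w, P w = 1) :
    entC P ≤ entC (fun a => ∑' b, P (a, b)) + entC (fun b => ∑' a, P (a, b)) := by
  set s := hfin.toFinset.image Prod.fst
  set t := hfin.toFinset.image Prod.snd
  have hs : (s : Set α) = Prod.fst '' P.support := by simp [s]
  have ht : (t : Set β) = Prod.snd '' P.support := by simp [t]
  have hst : P.support ⊆ (s ×ˢ t : Finset (α × β)) := by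
    rw [Finset.coe_product, hs, ht]; exact Set.subset_prod
  have hrow : ∀ a, ∑' b, P (a, b) = ∑ b ∈ t, P (a, b) := fun a =>
    tsum_eq_sum' fun b hb => by rw [ht]; exact ⟨(a, b), hb, rfl⟩
  have hcol : ∀ b, ∑' a, P (a, b) = ∑ a ∈ s, P (a, b) := fun b =>
    tsum_eq_sum' fun a ha => by rw [hs]; exact ⟨(a, b), ha, rfl⟩
  rw [entC_eq_sum hst, entC_eq_sum (hs.symm ▸ support_tsum_snd_subset P),
    entC_eq_sum (ht.symm ▸ support_tsum_fst_subset P), Finset.sum_product]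
  simp only [hrow, hcol]
  refine sum_negMulLog_le_add s t (fun a b => hP (a, b)) ?_
  rw [← Finset.sum_product, ← h1]
  exact (tsum_eq_sum' hst).symm

lemma tsum_ite_lt (n : ℕ) (c : ℝ) : ∑' i : ℕ, (if i < n then c else 0) = n * c := by
  rw [tsum_eq_sum (s := range n) fun i hi => if_neg (by simpa using hi)]
  rw [Finset.sum_congr rfl fun i hi => if_pos (Finset.mem_range.1 hi)]
  simp

lemma entC_uniform (n : ℕ) : entC (fun i : ℕ => if i < n then (n : ℝ)⁻¹ else 0) = log n := by
  rw [entC_eq_sum (s := range n) fun i hi => by by_contra h; simp_all]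
  rw [Finset.sum_congr rfl fun i hi => by rw [if_pos (Finset.mem_range.1 hi)]]
  rcases n.eq_zero_or_pos with rfl | hn
  · simp
  · simp only [Finset.sum_const, Finset.card_range, nsmul_eq_mul, negMulLog, log_inv]
    field_simp

-- The entropy moves continuously from `0` to `log m ≥ γ` along the mixtures of a point mass
-- and the uniform law on `m = ⌈exp γ⌉₊` points.
lemma exists_entC_eq {γ : ℝ} (hγ : 0 ≤ γ) :
    ∃ q : ℕ → ℝ, (∀ i, 0 ≤ q i) ∧ q.support.Finite ∧ ∑' i, q i = 1 ∧ entC q = γ := by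
  set m := ⌈exp γ⌉₊
  have hm : 0 < m := Nat.ceil_pos.2 (exp_pos γ)
  set Q : ℝ → ℕ → ℝ := fun t i =>
    (1 - t) * (if i = 0 then 1 else 0) + t * (if i < m then (m : ℝ)⁻¹ else 0)
  have hQ : ∀ t, (Q t).support ⊆ range m := fun t i hi => by
    by_contra h
    have him : ¬ i < m := by simpa using h
    exact hi (by simp [Q, him, show i ≠ 0 by omega])
  have hcont : Continuous fun t => entC (Q t) := by
    simp only [fun t => entC_eq_sum (hQ t), Q]
    fun_prop
  have h0 : entC (Q 0) = 0 := by simp [Q, entC, apply_ite negMulLog]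
  have h1 : entC (Q 1) = log m := by simpa [Q] using entC_uniform m
  have hγm : γ ≤ log m := (le_log_iff_exp_le (by positivity)).2 (Nat.le_ceil _)
  obtain ⟨t, ⟨ht0, ht1⟩, htγ⟩ := intermediate_value_Icc zero_le_one hcont.continuousOn
    (show γ ∈ Set.Icc (entC (Q 0)) (entC (Q 1)) by rw [h0, h1]; exact ⟨hγ, hγm⟩)
  refine ⟨Q t, fun i => by positivity, (range m).finite_toSet.subset (hQ t), ?_, htγ⟩
  rw [tsum_eq_sum' (hQ t)]
  simp [Q, Finset.sum_add_distrib, hm, Finset.sum_ite_of_true fun i => Finset.mem_range.1]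
  field_simp
  ring

end Entropy

section Feasible

variable {α 𝒰 : Type*} [Fintype 𝒰] {PU : 𝒰 → ℝ} {γ : ℝ} {p : 𝒰 → ℕ → ℕ → ℝ}

lemma Feasible.summable (hF : Feasible PU γ p) :
    Summable fun t : 𝒰 × ℕ × ℕ => p t.1 t.2.1 t.2.2 :=
  summable_of_hasFiniteSupport hF.2.1

lemma Feasible.tsum_eq_one (hsum : ∑ u, PU u = 1) (hF : Feasible PU γ p) :
    ∑' t : 𝒰 × ℕ × ℕ, p t.1 t.2.1 t.2.2 = 1 := by
  rw [hF.summable.tsum_prod, tsum_fintype, ← hsum]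
  refine Finset.sum_congr rfl fun u _ => ?_
  rw [(hF.summable.prod_factor u).tsum_prod]
  exact hF.2.2.1 u

def uxrEquiv (𝒰 : Type*) : (𝒰 × ℕ) × ℕ ≃ 𝒰 × ℕ × ℕ where
  toFun w := (w.1.1, w.2, w.1.2)
  invFun t := ((t.1, t.2.2), t.2.1)
  left_inv _ := rfl
  right_inv _ := rfl

lemma Feasible.finite_support_comp_equiv (hF : Feasible PU γ p) (e : α ≃ 𝒰 × ℕ × ℕ) :
    ((fun t : 𝒰 × ℕ × ℕ => p t.1 t.2.1 t.2.2) ∘ e).support.Finite := by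
  rw [support_comp_eq_preimage]
  exact hF.2.1.preimage e.injective.injOn

lemma Feasible.finite_support_ux (hF : Feasible PU γ p) :
    (fun t : 𝒰 × ℕ => ∑' r, p t.1 r t.2).support.Finite :=
  ((hF.finite_support_comp_equiv (uxrEquiv 𝒰)).image Prod.fst).subset
    (support_tsum_snd_subset ((fun t : 𝒰 × ℕ × ℕ => p t.1 t.2.1 t.2.2) ∘ uxrEquiv 𝒰))

lemma Feasible.tsum_ux (hsum : ∑ u, PU u = 1) (hF : Feasible PU γ p) :
    ∑' t : 𝒰 × ℕ, ∑' r, p t.1 r t.2 = 1 := by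
  have hS : Summable ((fun t : 𝒰 × ℕ × ℕ => p t.1 t.2.1 t.2.2) ∘ uxrEquiv 𝒰) :=
    summable_of_hasFiniteSupport (hF.finite_support_comp_equiv (uxrEquiv 𝒰))
  rw [← hF.tsum_eq_one hsum, ← (uxrEquiv 𝒰).tsum_eq]
  exact hS.tsum_prod.symm

lemma Feasible.finite_support_x (hF : Feasible PU γ p) :
    (fun x => ∑' u : 𝒰, ∑' r, p u r x).support.Finite :=
  (hF.finite_support_ux.image Prod.snd).subset
    (support_tsum_fst_subset fun t : 𝒰 × ℕ => ∑' r, p t.1 r t.2)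

lemma Feasible.tsum_x (hsum : ∑ u, PU u = 1) (hF : Feasible PU γ p) :
    ∑' x, ∑' u : 𝒰, ∑' r, p u r x = 1 := by
  have hS : Summable fun t : 𝒰 × ℕ => ∑' r, p t.1 r t.2 :=
    summable_of_hasFiniteSupport hF.finite_support_ux
  rw [← hF.tsum_ux hsum, hS.tsum_prod]
  exact hS.tsum_comm

lemma Feasible.finite_support_slice (hF : Feasible PU γ p) (u : 𝒰) (r : ℕ) :
    (p u r).support.Finite :=
  hF.2.1.preimage (f := fun x => (u, r, x)) fun _ _ _ _ h => by simpa using h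

lemma keyCost_nonneg (hsum : ∑ u, PU u = 1) (hF : Feasible PU γ p) : 0 ≤ keyCost p := by
  let e : ℕ × (𝒰 × ℕ) ≃ 𝒰 × ℕ × ℕ :=
    ⟨fun w => (w.2.1, w.1, w.2.2), fun t => (t.2.1, t.1, t.2.2), fun _ => rfl, fun _ => rfl⟩
  have hsub : entC ((fun t : 𝒰 × ℕ × ℕ => p t.1 t.2.1 t.2.2) ∘ e)
      ≤ entC (fun r => ∑' b : 𝒰 × ℕ, p b.1 r b.2) + entC (fun b : 𝒰 × ℕ => ∑' r, p b.1 r b.2) :=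
    entC_le_entC_add_entC (fun w => hF.1 _ _ _) (hF.finite_support_comp_equiv e)
      (by rw [← hF.tsum_eq_one hsum]; exact e.tsum_eq fun t => p t.1 t.2.1 t.2.2)
  have hR : (fun r => ∑' b : 𝒰 × ℕ, p b.1 r b.2) = fun r => ∑' u : 𝒰, ∑' x, p u r x :=
    funext fun r => (hF.summable.comp_injective (i := fun b : 𝒰 × ℕ => (b.1, r, b.2))
      fun _ _ h => by simpa [Prod.ext_iff] using h).tsum_prod
  rw [entC_comp_equiv, hR] at hsub
  unfold keyCost
  linarith

end Feasible

section AppendNoise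

variable {𝒰 : Type*} {p : 𝒰 → ℕ → ℕ → ℝ} {q : ℕ → ℝ}

-- The ciphertext `X` becomes the pair `(X, Z)`, encoded by `Nat.pair`, with `Z ∼ q` independent
-- of `(U, R, X)`.
def appendNoise (p : 𝒰 → ℕ → ℕ → ℝ) (q : ℕ → ℝ) : 𝒰 → ℕ → ℕ → ℝ :=
  fun u r (x : ℕ) => p u r x.unpair.1 * q x.unpair.2

def unpairLast (α : Type*) : α × ℕ ≃ (α × ℕ) × ℕ :=
  (Equiv.prodCongr (Equiv.refl α) Nat.pairEquiv.symm).trans (Equiv.prodAssoc α ℕ ℕ).symm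

def unpairLast₃ (α β : Type*) : α × β × ℕ ≃ (α × β × ℕ) × ℕ :=
  (Equiv.prodCongr (Equiv.refl α) (unpairLast β)).trans (Equiv.prodAssoc α (β × ℕ) ℕ).symm

lemma tsum_unpair_mul {f g : ℕ → ℝ} (hf : f.support.Finite) (hg : g.support.Finite) :
    ∑' x : ℕ, f x.unpair.1 * g x.unpair.2 = (∑' i, f i) * ∑' j, g j := by
  rw [Summable.tsum_mul_tsum (summable_of_hasFiniteSupport hf) (summable_of_hasFiniteSupport hg)
    (summable_of_hasFiniteSupport ((hf.prod hg).subset (support_prod_mul_subset f g)))]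
  exact Nat.pairEquiv.symm.tsum_eq fun w => f w.1 * g w.2

lemma tsum_tsum_appendNoise (x : ℕ) :
    ∑' u, ∑' r, appendNoise p q u r x = (∑' u, ∑' r, p u r x.unpair.1) * q x.unpair.2 := by
  simp only [appendNoise, tsum_mul_right]

variable [Fintype 𝒰] {PU : 𝒰 → ℝ} {γ : ℝ}

lemma Feasible.tsum_appendNoise (hF : Feasible PU γ p) (hqfin : q.support.Finite)
    (hq1 : ∑' i, q i = 1) (u : 𝒰) (r : ℕ) :
    ∑' x, appendNoise p q u r x = ∑' x, p u r x := by
  simp only [appendNoise]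
  rw [tsum_unpair_mul (hF.finite_support_slice u r) hqfin, hq1, mul_one]

lemma feasible_appendNoise (hsum : ∑ u, PU u = 1) (hF : Feasible PU γ p) (hq0 : ∀ i, 0 ≤ q i)
    (hqfin : q.support.Finite) (hq1 : ∑' i, q i = 1) :
    Feasible PU (γ + entC q) (appendNoise p q) := by
  obtain ⟨hp0, hpfin, hU, hXU, hRU, ⟨g, hg⟩, hX⟩ := id hF
  have hrow := hF.tsum_appendNoise hqfin hq1
  refine ⟨fun u r x => mul_nonneg (hp0 _ _ _) (hq0 _), ?_, fun u => ?_, fun u x => ?_,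
    fun u r => ?_, ⟨fun r x => g r x.unpair.1, fun u r x h => hg u r _ (left_ne_zero_of_mul h)⟩, ?_⟩
  · have : (fun t : 𝒰 × ℕ × ℕ => appendNoise p q t.1 t.2.1 t.2.2)
        = (fun w => p w.1.1 w.1.2.1 w.1.2.2 * q w.2) ∘ unpairLast₃ 𝒰 ℕ := rfl
    rw [this, support_comp_eq_preimage]
    exact ((hpfin.prod hqfin).subset (support_prod_mul_subset _ _)).preimage
      (unpairLast₃ 𝒰 ℕ).injective.injOn
  · simp only [hrow, hU]
  · rw [tsum_tsum_appendNoise]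
    simp only [appendNoise]
    rw [tsum_mul_right, hXU]
    ring
  · simp only [hrow]
    exact hRU u r
  · simp only [tsum_tsum_appendNoise]
    refine (entC_mul_of_equiv Nat.pairEquiv.symm hF.finite_support_x hqfin (hF.tsum_x hsum)
      hq1).trans ?_
    rw [hX]
    ring

lemma keyCost_appendNoise (hsum : ∑ u, PU u = 1) (hF : Feasible PU γ p)
    (hqfin : q.support.Finite) (hq1 : ∑' i, q i = 1) :
    keyCost (appendNoise p q) = keyCost p := by
  have hUX : entC (fun t : 𝒰 × ℕ => ∑' r, appendNoise p q t.1 r t.2)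
      = entC (fun t : 𝒰 × ℕ => ∑' r, p t.1 r t.2) + entC q := by
    simp only [appendNoise, tsum_mul_right]
    exact entC_mul_of_equiv (unpairLast 𝒰) hF.finite_support_ux hqfin (hF.tsum_ux hsum) hq1
  have hURX : entC (fun t : 𝒰 × ℕ × ℕ => appendNoise p q t.1 t.2.1 t.2.2)
      = entC (fun t : 𝒰 × ℕ × ℕ => p t.1 t.2.1 t.2.2) + entC q :=
    entC_mul_of_equiv (unpairLast₃ 𝒰 ℕ) hF.2.1 hqfin (hF.tsum_eq_one hsum) hq1
  unfold keyCost
  simp only [hF.tsum_appendNoise hqfin hq1, hUX, hURX]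
  ring

end AppendNoise

section OneTimePad

variable {𝒰 : Type*} {n : ℕ}

lemma ZMod.lt_and_eq_val_add_iff [NeZero n] (a : ZMod n) (r x : ℕ) :
    r < n ∧ x = (a + r).val ↔ x < n ∧ r = ((x : ZMod n) - a).val := by
  constructor
  · rintro ⟨hr, rfl⟩
    refine ⟨ZMod.val_lt _, ?_⟩
    rw [ZMod.natCast_zmod_val, add_sub_cancel_left, ZMod.val_natCast, Nat.mod_eq_of_lt hr]
  · rintro ⟨hx, rfl⟩
    refine ⟨ZMod.val_lt _, ?_⟩
    rw [ZMod.natCast_zmod_val, add_sub_cancel, ZMod.val_natCast, Nat.mod_eq_of_lt hx]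

-- The key `R` is uniform on `{0, …, n - 1}` and the ciphertext is `X = a U + R` in `ZMod n`.
noncomputable def oneTimePad (a : 𝒰 → ZMod n) (PU : 𝒰 → ℝ) : 𝒰 → ℕ → ℕ → ℝ :=
  fun u r x => if r < n ∧ x = (a u + r).val then PU u / n else 0

lemma tsum_oneTimePad_ciphertext (a : 𝒰 → ZMod n) (PU : 𝒰 → ℝ) (u : 𝒰) (r : ℕ) :
    ∑' x, oneTimePad a PU u r x = if r < n then PU u / n else 0 := by
  by_cases hr : r < n <;> simp [oneTimePad, hr]

lemma tsum_oneTimePad_key [NeZero n] (a : 𝒰 → ZMod n) (PU : 𝒰 → ℝ) (u : 𝒰) (x : ℕ) :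
    ∑' r, oneTimePad a PU u r x = if x < n then PU u / n else 0 := by
  simp only [oneTimePad, ZMod.lt_and_eq_val_add_iff]
  by_cases hx : x < n <;> simp [hx]

lemma oneTimePad_ne_zero {a : 𝒰 → ZMod n} {PU : 𝒰 → ℝ} {u : 𝒰} {r x : ℕ} [NeZero n]
    (h : oneTimePad a PU u r x ≠ 0) : PU u ≠ 0 ∧ a u = (x : ZMod n) - r := by
  obtain ⟨⟨-, hx⟩, hu⟩ := ite_ne_right_iff.1 h
  refine ⟨(div_ne_zero_iff.1 hu).1, ?_⟩
  rw [hx, ZMod.natCast_zmod_val, add_sub_cancel_right]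

variable [Fintype 𝒰] {PU : 𝒰 → ℝ}

lemma tsum_ite_div (hsum : ∑ u, PU u = 1) (c : Prop) [Decidable c] :
    ∑' u : 𝒰, (if c then PU u / n else 0) = if c then (n : ℝ)⁻¹ else 0 := by
  split_ifs <;> simp [tsum_fintype, ← Finset.sum_div, hsum]

lemma oneTimePad_ciphertextMarginal [NeZero n] (hsum : ∑ u, PU u = 1) (a : 𝒰 → ZMod n)
    (x : ℕ) : ∑' u, ∑' r, oneTimePad a PU u r x = if x < n then (n : ℝ)⁻¹ else 0 := by
  simp only [tsum_oneTimePad_key]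
  exact tsum_ite_div hsum _

lemma oneTimePad_keyMarginal (hsum : ∑ u, PU u = 1) (a : 𝒰 → ZMod n) (r : ℕ) :
    ∑' u, ∑' x, oneTimePad a PU u r x = if r < n then (n : ℝ)⁻¹ else 0 := by
  simp only [tsum_oneTimePad_ciphertext]
  exact tsum_ite_div hsum _

lemma feasible_oneTimePad [NeZero n] (hnn : ∀ u, 0 ≤ PU u) (hsum : ∑ u, PU u = 1)
    {a : 𝒰 → ZMod n} (ha : Set.InjOn a {u | PU u ≠ 0}) :
    Feasible PU (log n - log #{u | PU u ≠ 0}) (oneTimePad a PU) := by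
  have : Nonempty 𝒰 := by
    by_contra h
    simp [not_nonempty_iff.1 h] at hsum
  have hn : (n : ℝ) ≠ 0 := Nat.cast_ne_zero.2 (NeZero.ne n)
  refine ⟨fun u r x => ?_, ?_, fun u => ?_, fun u x => ?_, fun u r => ?_, ?_, ?_⟩
  · unfold oneTimePad
    split_ifs
    exacts [div_nonneg (hnn u) n.cast_nonneg, le_rfl]
  · refine (Set.finite_univ.prod ((Set.finite_Iio n).prod (Set.finite_Iio n))).subset
      fun t ht => ?_
    obtain ⟨⟨hr, hx⟩, -⟩ := ite_ne_right_iff.1 ht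
    exact ⟨trivial, hr, hx ▸ ZMod.val_lt _⟩
  · simp only [tsum_oneTimePad_ciphertext, tsum_ite_lt]
    field_simp
  · rw [tsum_oneTimePad_key, oneTimePad_ciphertextMarginal hsum]
    split_ifs <;> simp [div_eq_mul_inv]
  · rw [tsum_oneTimePad_ciphertext, oneTimePad_keyMarginal hsum]
    split_ifs <;> simp [div_eq_mul_inv]
  · refine ⟨fun r x => Function.invFunOn a {u | PU u ≠ 0} ((x : ZMod n) - r), fun u r x h => ?_⟩
    obtain ⟨hu, hcode⟩ := oneTimePad_ne_zero h
    dsimp only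
    rw [← hcode]
    exact (ha.leftInvOn_invFunOn hu).symm
  · simp only [oneTimePad_ciphertextMarginal hsum, entC_uniform]
    ring

lemma exists_feasible_zero (hnn : ∀ u, 0 ≤ PU u) (hsum : ∑ u, PU u = 1) :
    ∃ p, Feasible PU 0 p := by
  set S := univ.filter fun u => PU u ≠ 0
  have hS : S.Nonempty := by
    obtain ⟨u, -, hu⟩ := Finset.exists_ne_zero_of_sum_ne_zero (hsum.trans_ne one_ne_zero)
    exact ⟨u, by simpa [S] using hu⟩
  have : NeZero #S := ⟨hS.card_pos.ne'⟩
  let e : S ≃ ZMod #S := Fintype.equivOfCardEq (by simp)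
  let a : 𝒰 → ZMod #S := fun u => if h : u ∈ S then e ⟨u, h⟩ else 0
  have ha : Set.InjOn a {u | PU u ≠ 0} := by
    intro u hu v hv huv
    have hu' : u ∈ S := by simpa [S] using hu
    have hv' : v ∈ S := by simpa [S] using hv
    simp only [a, hu', hv', dite_true] at huv
    exact congrArg Subtype.val (e.injective huv)
  have := feasible_oneTimePad hnn hsum ha
  rw [sub_self] at this
  exact ⟨_, this⟩

end OneTimePad

def keyCosts {𝒰 : Type*} [Fintype 𝒰] (PU : 𝒰 → ℝ) (γ : ℝ) : Set ℝ :=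
  {c | ∃ p : 𝒰 → ℕ → ℕ → ℝ, Feasible PU γ p ∧ c = keyCost p}

section KeyCosts

variable {𝒰 : Type*} [Fintype 𝒰] {PU : 𝒰 → ℝ}

lemma keyCosts_subset (hsum : ∑ u, PU u = 1) {γ₁ γ₂ : ℝ} (h : γ₁ ≤ γ₂) :
    keyCosts PU γ₁ ⊆ keyCosts PU γ₂ := by
  rintro c ⟨p, hp, rfl⟩
  obtain ⟨q, hq0, hqfin, hq1, hq⟩ := exists_entC_eq (sub_nonneg.2 h)
  have hF := feasible_appendNoise hsum hp hq0 hqfin hq1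
  rw [hq, add_sub_cancel] at hF
  exact ⟨_, hF, (keyCost_appendNoise hsum hp hqfin hq1).symm⟩

lemma keyCosts_nonempty (hnn : ∀ u, 0 ≤ PU u) (hsum : ∑ u, PU u = 1) {γ : ℝ} (hγ : 0 ≤ γ) :
    (keyCosts PU γ).Nonempty := by
  obtain ⟨p, hp⟩ := exists_feasible_zero hnn hsum
  exact ⟨_, keyCosts_subset hsum hγ ⟨p, hp, rfl⟩⟩

lemma bddBelow_keyCosts (hsum : ∑ u, PU u = 1) (γ : ℝ) : BddBelow (keyCosts PU γ) :=
  ⟨0, by rintro c ⟨p, hp, rfl⟩; exact keyCost_nonneg hsum hp⟩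

end KeyCosts

/-- For every `γ ≥ 0` the feasible set is non-empty, and
`f(γ) = inf { I(R;U,X) }` over the feasible set is non-increasing on
`[0,∞)`. -/
theorem stmt_19 {𝒰 : Type*} [Fintype 𝒰] (PU : 𝒰 → ℝ)
    (hnn : ∀ u, 0 ≤ PU u) (hsum : ∑ u, PU u = 1) :
    (∀ γ : ℝ, 0 ≤ γ →
      {c : ℝ | ∃ p : 𝒰 → ℕ → ℕ → ℝ, Feasible PU γ p ∧ c = keyCost p}.Nonempty)
    ∧ (∀ γ₁ γ₂ : ℝ, 0 ≤ γ₁ → γ₁ ≤ γ₂ →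
        sInf {c : ℝ | ∃ p : 𝒰 → ℕ → ℕ → ℝ, Feasible PU γ₂ p ∧ c = keyCost p}
          ≤ sInf {c : ℝ | ∃ p : 𝒰 → ℕ → ℕ → ℝ, Feasible PU γ₁ p ∧ c = keyCost p}) :=
  ⟨fun _ hγ => keyCosts_nonempty hnn hsum hγ, fun _ γ₂ h₁ h₁₂ =>
    csInf_le_csInf (bddBelow_keyCosts hsum γ₂) (keyCosts_nonempty hnn hsum h₁)
      (keyCosts_subset hsum h₁₂)⟩
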